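/- arXiv:2506.09509 — 2 statements merged into one kernel-verified Lean document; each statement's English description precedes it below -/
import Mathlib

section
/- For b ≥ 2 and non-negative integer n with base-b digits a_0, a_1, ..., define the carry sequence c_0 = 0, c_{k+1} = ⌊(a_k + c_k)/b⌋ + a_k. Then the k-th base-b digit of ((b+1)n) ⊖_b n equals c_k mod b, where ⊖_b is digitwise subtraction mod b in base b. -/
/-!
Write `n = q b^k + r` with `r < b^k`. The carry into position `k` when multiplying `n` by `b + 1`
is `c_k = ⌊(b + 1) r / b^k⌋`, so `⌊(b + 1) n / b^k⌋ = (b + 1) q + c_k` and digit `k` of `(b + 1) n`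
is `(a_k + c_k) mod b`. Subtracting `a_k` digitwise leaves `c_k mod b`.
-/

/-- The `i`-th digit of the base-`b` expansion of `n`. -/
def bDigit (b n i : ℕ) : ℕ := (Nat.digits b n).getD i 0

/-- One step of the base-`(-b)` digit extraction: remove the least digit and divide by `-b`. -/
def negaStep (b m : ℤ) : ℤ := (m - m % b) / (-b)

/-- The `i`-th digit of the base-`(-b)` expansion of the integer `m`
(digits lie in `{0,...,b-1}` when `b ≥ 2`). -/
def negaDigit (b m : ℤ) (i : ℕ) : ℤ := ((negaStep b)^[i] m) % b

/-- Digitwise addition mod `b` of base-`(-b)` expansions, read off in powers of `+b`. -/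
noncomputable def oplusNeg (b α β : ℤ) : ℤ :=
  ∑ᶠ i : ℕ, ((negaDigit b α i + negaDigit b β i) % b) * b ^ i

/-- Digitwise addition mod `b` of base-`b` expansions. -/
noncomputable def oplus (b α β : ℕ) : ℕ :=
  ∑ᶠ i : ℕ, ((bDigit b α i + bDigit b β i) % b) * b ^ i

/-- Digitwise subtraction mod `b` of base-`b` expansions. -/
noncomputable def ominus (b α β : ℕ) : ℕ :=
  ∑ᶠ i : ℕ, ((((bDigit b α i : ℤ) - (bDigit b β i : ℤ)) % (b : ℤ)).toNat) * b ^ i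

/-- Flattening: replace each nonzero base-`b` digit by `1`. -/
noncomputable def flat (b n : ℕ) : ℕ :=
  ∑ᶠ i : ℕ, min (bDigit b n i) 1 * b ^ i

/-- The carry sequence for multiplying `n` by `b+1` in base `b`. -/
def carrySeq (b n : ℕ) : ℕ → ℕ
  | 0 => 0
  | k + 1 => (bDigit b n k + carrySeq b n k) / b + bDigit b n k

open Finset

theorem bDigit_eq_div_pow_mod {b : ℕ} (hb : 2 ≤ b) (n i : ℕ) : bDigit b n i = n / b ^ i % b :=
  Nat.getD_digits n i hb

theorem bDigit_eq_zero_of_le {b n i : ℕ} (hb : 2 ≤ b) (h : n ≤ i) : bDigit b n i = 0 := by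
  have hlt : n < b ^ i := (Nat.lt_pow_self hb).trans_le (Nat.pow_le_pow_right (by omega) h)
  rw [bDigit_eq_div_pow_mod hb, Nat.div_eq_of_lt hlt, Nat.zero_mod]

theorem sum_range_succ_mul_pow (b m : ℕ) (f : ℕ → ℕ) :
    ∑ i ∈ range (m + 1), f i * b ^ i = f 0 + b * ∑ i ∈ range m, f (i + 1) * b ^ i := by
  rw [sum_range_succ', mul_sum, pow_zero, mul_one, add_comm]
  exact congrArg (f 0 + ·) (sum_congr rfl fun i _ => by ring)

theorem sum_range_mul_pow_div_pow_mod {b : ℕ} {f : ℕ → ℕ} (hf : ∀ i, f i < b) {L k : ℕ}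
    (hk : k < L) : (∑ i ∈ range L, f i * b ^ i) / b ^ k % b = f k := by
  induction k generalizing f L with
  | zero =>
    obtain ⟨m, rfl⟩ : ∃ m, L = m + 1 := ⟨L - 1, by omega⟩
    rw [sum_range_succ_mul_pow, pow_zero, Nat.div_one, Nat.add_mul_mod_self_left,
      Nat.mod_eq_of_lt (hf 0)]
  | succ k ih =>
    obtain ⟨m, rfl⟩ : ∃ m, L = m + 1 := ⟨L - 1, by omega⟩
    rw [sum_range_succ_mul_pow, pow_succ', ← Nat.div_div_eq_div_mul,
      Nat.add_mul_div_left _ _ (Nat.zero_lt_of_lt (hf 0)), Nat.div_eq_of_lt (hf 0), zero_add]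
    exact ih (fun i => hf (i + 1)) (by omega)

theorem bDigit_finsum_mul_pow {b : ℕ} (hb : 2 ≤ b) {f : ℕ → ℕ} (hf : ∀ i, f i < b) {L : ℕ}
    (hL : ∀ i, L ≤ i → f i = 0) (k : ℕ) : bDigit b (∑ᶠ i, f i * b ^ i) k = f k := by
  have hsupp : (Function.support fun i => f i * b ^ i) ⊆ ↑(range (L + k + 1)) :=
    Function.support_subset_iff'.2 fun i hi => by
      rw [hL i (by simp at hi; omega), zero_mul]
  rw [bDigit_eq_div_pow_mod hb, finsum_eq_finsetSum_of_support_subset _ hsupp,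
    sum_range_mul_pow_div_pow_mod hf (by omega)]

theorem bDigit_ominus {b : ℕ} (hb : 2 ≤ b) (α β k : ℕ) :
    bDigit b (ominus b α β) k = (((bDigit b α k : ℤ) - bDigit b β k) % b).toNat := by
  refine bDigit_finsum_mul_pow hb (fun i => ?_) (L := α + β) (fun i hi => ?_) k
  · have : ((bDigit b α i : ℤ) - bDigit b β i) % b < b := Int.emod_lt_of_pos _ (by omega)
    omega
  · rw [bDigit_eq_zero_of_le hb (by omega : α ≤ i), bDigit_eq_zero_of_le hb (by omega : β ≤ i)]
    rfl

theorem carrySeq_eq_div {b : ℕ} (hb : 2 ≤ b) (n k : ℕ) :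
    carrySeq b n k = (b + 1) * (n % b ^ k) / b ^ k := by
  induction k with
  | zero => simp [carrySeq, Nat.mod_one]
  | succ k ih =>
    have hbk : 0 < b ^ k := by positivity
    set a := bDigit b n k with ha
    set c := (b + 1) * (n % b ^ k) / b ^ k
    rw [carrySeq, ih, Nat.mod_pow_succ, ← bDigit_eq_div_pow_mod hb, ← ha, pow_succ,
      ← Nat.div_div_eq_div_mul,
      show (b + 1) * (n % b ^ k + b ^ k * a) = (b + 1) * (n % b ^ k) + (a + b * a) * b ^ k by ring,
      Nat.add_mul_div_right _ _ hbk, show c + (a + b * a) = a + c + a * b by ring,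
      Nat.add_mul_div_right _ _ (by omega)]

theorem bDigit_succ_mul {b : ℕ} (hb : 2 ≤ b) (n k : ℕ) :
    bDigit b ((b + 1) * n) k = (bDigit b n k + carrySeq b n k) % b := by
  have hbk : 0 < b ^ k := by positivity
  have hn : (b + 1) * n = (b + 1) * (n % b ^ k) + (n / b ^ k + b * (n / b ^ k)) * b ^ k := by
    conv_lhs => rw [← Nat.mod_add_div n (b ^ k)]
    ring
  rw [bDigit_eq_div_pow_mod hb, bDigit_eq_div_pow_mod hb, carrySeq_eq_div hb, hn,
    Nat.add_mul_div_right _ _ hbk, ← add_assoc, Nat.add_mul_mod_self_left, Nat.mod_add_mod,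
    add_comm]

theorem stmt6 (b n : ℕ) (hb : 2 ≤ b) (k : ℕ) :
    bDigit b (ominus b ((b + 1) * n) n) k = carrySeq b n k % b := by
  rw [bDigit_ominus hb, bDigit_succ_mul hb, ← Int.toNat_natCast (carrySeq b n k % b)]
  congr 1
  push_cast
  rw [Int.sub_emod, Int.emod_emod_of_dvd _ dvd_rfl, ← Int.sub_emod, add_sub_cancel_left]
end

section
/- For b ≥ 2, the map n ↦ n ⊕_{-b} (-n) takes values in the set of non-negative integers all of whose base-b digits lie in {0,1}, and satisfies (n ⊕_{-b} (-n)) = 0 if and only if n = 0. -/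
/-!
Let `x_i` and `y_i` be `n` and `-n` with their `i` lowest base-`(-b)` digits removed, and
`s_i = x_i + y_i`. From `x_i = d_i(n) - b x_{i+1}` the digit sums satisfy
`d_i(n) + d_i(-n) = s_i + b s_{i+1}` with `s_0 = 0`; since a digit sum is at most `2b - 2`, this
keeps `s_i ∈ {0, 1}` by induction. Hence the `i`-th digit of `n ⊕_{-b} (-n)` is `s_i`, and if every
`s_i` vanishes then so does every digit of `n`, i.e. `n = 0`.
-/

section NegaStep

variable {b : ℤ}

lemma emod_add_neg_mul_negaStep (b m : ℤ) : m % b + -b * negaStep b m = m := by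
  rw [negaStep, Int.mul_ediv_cancel' (neg_dvd.2 Int.dvd_self_sub_emod)]
  ring

lemma negaStep_eq_neg_ediv (hb : b ≠ 0) (m : ℤ) : negaStep b m = -(m / b) := by
  have h := emod_add_neg_mul_negaStep b m
  have h' := Int.emod_def m b
  exact mul_left_cancel₀ hb (by linarith)

@[simp]
lemma negaStep_zero (b : ℤ) : negaStep b 0 = 0 := by
  simp [negaStep]

lemma iterate_negaStep_eq_zero_of_le {m : ℤ} {k i : ℕ} (h : (negaStep b)^[k] m = 0)
    (hki : k ≤ i) : (negaStep b)^[i] m = 0 := by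
  obtain ⟨j, rfl⟩ := Nat.exists_eq_add_of_le hki
  rw [add_comm, Function.iterate_add_apply, h, Function.iterate_fixed (negaStep_zero b)]

lemma natAbs_negaStep_lt (hb : 2 ≤ b) {m : ℤ} (hm : 2 ≤ m.natAbs) :
    (negaStep b m).natAbs < m.natAbs := by
  have hm' : m % b - b * negaStep b m = m := by linarith [emod_add_neg_mul_negaStep b m]
  have hr₀ := Int.emod_nonneg m (by omega : b ≠ 0)
  have hr₁ := Int.emod_lt_of_pos m (by omega : 0 < b)
  set t := negaStep b m
  rcases lt_trichotomy t 0 with ht | ht | ht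
  · have : b * t ≤ 2 * t := by nlinarith
    omega
  · omega
  · have : 2 * t - 2 ≤ b * t - b := by nlinarith
    omega

lemma iterate_two_negaStep_eq_zero (hb : 2 ≤ b) {m : ℤ} (hm : m.natAbs ≤ 1) :
    (negaStep b)^[2] m = 0 := by
  have hone : negaStep b 1 = 0 := by
    rw [negaStep_eq_neg_ediv (by omega), Int.ediv_eq_zero_of_lt zero_le_one (by omega), neg_zero]
  have hneg : negaStep b (-1) = 1 := by
    rw [negaStep_eq_neg_ediv (by omega), Int.neg_one_ediv, Int.sign_eq_one_of_pos (by omega),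
      neg_neg]
  obtain rfl | rfl | rfl : m = -1 ∨ m = 0 ∨ m = 1 := by omega
  all_goals simp [hone, hneg]

lemma exists_iterate_negaStep_eq_zero (hb : 2 ≤ b) (m : ℤ) :
    ∃ k, (negaStep b)^[k] m = 0 := by
  induction h : m.natAbs using Nat.strong_induction_on generalizing m with
  | _ N ih =>
    subst h
    by_cases hm : m.natAbs ≤ 1
    · exact ⟨2, iterate_two_negaStep_eq_zero hb hm⟩
    · obtain ⟨k, hk⟩ := ih _ (natAbs_negaStep_lt hb (by omega)) (negaStep b m) rfl
      exact ⟨k + 1, hk⟩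

end NegaStep

lemma bDigit_sum_range_mul_pow {b k : ℕ} {ε : ℕ → ℕ} (hb : 2 ≤ b) (hε : ∀ i, ε i < b)
    (hk : ∀ i ≥ k, ε i = 0) (j : ℕ) : bDigit b (∑ i ∈ Finset.range k, ε i * b ^ i) j = ε j := by
  rw [bDigit, Nat.getD_digits _ _ hb]
  induction k generalizing ε j with
  | zero => simp [hk j j.zero_le]
  | succ k ih =>
    have hshift : ∑ i ∈ Finset.range k, ε (i + 1) * b ^ (i + 1)
        = b * ∑ i ∈ Finset.range k, ε (i + 1) * b ^ i := by
      rw [Finset.mul_sum]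
      exact Finset.sum_congr rfl fun i _ => by ring
    rw [Finset.sum_range_succ', hshift, pow_zero, mul_one]
    cases j with
    | zero => simp [Nat.mod_eq_of_lt (hε 0)]
    | succ j =>
      rw [pow_succ', ← Nat.div_div_eq_div_mul, Nat.mul_add_div (by omega),
        Nat.div_eq_of_lt (hε 0), add_zero]
      exact ih (fun i => hε (i + 1)) (fun i hi => hk (i + 1) (by omega)) j

section NegaCarry

variable {b : ℤ}

def negaCarry (b m : ℤ) (i : ℕ) : ℤ := (negaStep b)^[i] m + (negaStep b)^[i] (-m)

lemma negaDigit_add_negaDigit_neg (b m : ℤ) (i : ℕ) :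
    negaDigit b m i + negaDigit b (-m) i = negaCarry b m i + b * negaCarry b m (i + 1) := by
  simp only [negaDigit, negaCarry, Function.iterate_succ_apply']
  linear_combination emod_add_neg_mul_negaStep b ((negaStep b)^[i] m) +
    emod_add_neg_mul_negaStep b ((negaStep b)^[i] (-m))

lemma negaDigit_nonneg (hb : b ≠ 0) (m : ℤ) (i : ℕ) : 0 ≤ negaDigit b m i :=
  Int.emod_nonneg _ hb

lemma negaDigit_lt (hb : 0 < b) (m : ℤ) (i : ℕ) : negaDigit b m i < b :=
  Int.emod_lt_of_pos _ hb

lemma negaCarry_mem_Icc (hb : 2 ≤ b) (m : ℤ) (i : ℕ) : negaCarry b m i ∈ Set.Icc 0 1 := by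
  induction i with
  | zero => simp [negaCarry]
  | succ i ih =>
    have h := negaDigit_add_negaDigit_neg b m i
    have hb₀ : 0 < b := by omega
    have hd := negaDigit_lt hb₀ m i
    have hd' := negaDigit_lt hb₀ (-m) i
    have hd₀ := negaDigit_nonneg hb₀.ne' m i
    have hd₀' := negaDigit_nonneg hb₀.ne' (-m) i
    obtain ⟨hc₀, hc₁⟩ := ih
    constructor <;> nlinarith

lemma negaDigit_add_negaDigit_neg_emod (hb : 2 ≤ b) (m : ℤ) (i : ℕ) :
    (negaDigit b m i + negaDigit b (-m) i) % b = negaCarry b m i := by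
  obtain ⟨hc₀, hc₁⟩ := negaCarry_mem_Icc hb m i
  rw [negaDigit_add_negaDigit_neg, Int.add_mul_emod_self_left, Int.emod_eq_of_lt hc₀ (by omega)]

lemma exists_negaCarry_eq_zero (hb : 2 ≤ b) (m : ℤ) : ∃ k, ∀ i ≥ k, negaCarry b m i = 0 := by
  obtain ⟨k, hk⟩ := exists_iterate_negaStep_eq_zero hb m
  obtain ⟨k', hk'⟩ := exists_iterate_negaStep_eq_zero hb (-m)
  refine ⟨max k k', fun i hi => ?_⟩
  rw [negaCarry, iterate_negaStep_eq_zero_of_le hk (le_of_max_le_left hi),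
    iterate_negaStep_eq_zero_of_le hk' (le_of_max_le_right hi), add_zero]

lemma eq_zero_of_forall_negaCarry_eq_zero (hb : 2 ≤ b) {m : ℤ}
    (h : ∀ i, negaCarry b m i = 0) : m = 0 := by
  have hdigit : ∀ i, negaDigit b m i = 0 := fun i => by
    have := negaDigit_add_negaDigit_neg b m i
    rw [h, h] at this
    have hb₀ : b ≠ 0 := by omega
    linarith [negaDigit_nonneg hb₀ m i, negaDigit_nonneg hb₀ (-m) i]
  have hexp : ∀ i, m = (-b) ^ i * (negaStep b)^[i] m := fun i => by
    induction i with
    | zero => simp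
    | succ i ih =>
      have := emod_add_neg_mul_negaStep b ((negaStep b)^[i] m)
      rw [← negaDigit, hdigit, zero_add] at this
      rw [Function.iterate_succ_apply', pow_succ, mul_assoc, this]
      exact ih
  obtain ⟨k, hk⟩ := exists_iterate_negaStep_eq_zero hb m
  rw [hexp k, hk, mul_zero]

lemma oplusNeg_neg_eq_sum_range (hb : 2 ≤ b) {m : ℤ} {k : ℕ}
    (hk : ∀ i ≥ k, negaCarry b m i = 0) :
    oplusNeg b m (-m) = ∑ i ∈ Finset.range k, negaCarry b m i * b ^ i := by
  simp only [oplusNeg, negaDigit_add_negaDigit_neg_emod hb]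
  refine finsum_eq_sum_of_support_subset _ fun i hi => ?_
  by_contra hik
  simp only [Finset.coe_range, Set.mem_Iio, not_lt] at hik
  exact hi (by simp [hk i hik])

end NegaCarry

theorem stmt12 (b : ℕ) (hb : 2 ≤ b) (n : ℕ) :
    (∀ i, bDigit b (oplusNeg (b : ℤ) (n : ℤ) (-(n : ℤ))).toNat i ≤ 1) ∧
    (oplusNeg (b : ℤ) (n : ℤ) (-(n : ℤ)) = 0 ↔ n = 0) := by
  have hb' : (2 : ℤ) ≤ b := by exact_mod_cast hb
  have hc := negaCarry_mem_Icc hb' (n : ℤ)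
  obtain ⟨k, hk⟩ := exists_negaCarry_eq_zero hb' (n : ℤ)
  have hsum : oplusNeg b n (-n) =
      ((∑ i ∈ Finset.range k, (negaCarry b n i).toNat * b ^ i : ℕ) : ℤ) := by
    rw [oplusNeg_neg_eq_sum_range hb' hk]
    push_cast
    exact Finset.sum_congr rfl fun i _ => by rw [Int.toNat_of_nonneg (hc i).1]
  have hdigit := bDigit_sum_range_mul_pow (k := k) (ε := fun i => (negaCarry b n i).toNat) hb
    (fun i => by obtain ⟨-, h⟩ := hc i; omega) (fun i hi => by simp [hk i hi])
  refine ⟨fun i => ?_, ⟨fun h => ?_, fun hn => ?_⟩⟩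
  · rw [hsum, Int.toNat_natCast, hdigit]
    obtain ⟨-, h⟩ := hc i
    omega
  · refine Int.natCast_eq_zero.1 (eq_zero_of_forall_negaCarry_eq_zero hb' fun i => ?_)
    rw [hsum, Nat.cast_eq_zero] at h
    have hi := hdigit i
    rw [h] at hi
    obtain ⟨h0, -⟩ := hc i
    simp only [bDigit, Nat.digits_zero, List.getD_nil] at hi
    omega
  · subst hn
    simp [oplusNeg, negaDigit, Function.iterate_fixed (negaStep_zero _)]
end
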